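/- If a sequence (T_j) of tournaments with n_j = |V(T_j)| → ∞ satisfies (1/n_j²) · Σ_{(u,v) arc of T_j} |C(u,v)/(n_j − 2) − 1/4| → 0, then p(Tr₄, T_j) + p(R₄, T_j) → 3/4 as j → ∞. -/

import Mathlib

/-- A tournament on `n` vertices: an irreflexive relation such that for every
pair of distinct vertices exactly one direction holds. -/
structure Tournament (n : ℕ) where
  rel : Fin n → Fin n → Bool
  irrefl : ∀ v, rel v v = false
  total : ∀ u v, u ≠ v → rel u v = !rel v u

/-- The transitive tournament `Tr_k`. -/
def Tr (k : ℕ) : Tournament k where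
  rel i j := decide (i < j)
  irrefl v := by simp
  total u v h := by
    rcases lt_or_gt_of_ne h with h' | h'
    · simp [h', lt_asymm h']
    · simp [h', lt_asymm h']

/-- The cyclic triangle. -/
def C3 : Tournament 3 where
  rel := ![![false, true, false], ![false, false, true], ![true, false, false]]
  irrefl := by decide
  total := by decide

/-- `W₄`: the non-transitive tournament on 4 vertices with a "winner". -/
def W4 : Tournament 4 where
  rel := ![![false, true, true, true], ![false, false, true, false],
           ![false, false, false, true], ![false, true, false, false]]
  irrefl := by decide
  total := by decide

/-- `L₄`: the non-transitive tournament on 4 vertices with a "loser". -/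
def L4 : Tournament 4 where
  rel := ![![false, true, false, true], ![false, false, true, true],
           ![true, false, false, true], ![false, false, false, false]]
  irrefl := by decide
  total := by decide

/-- `R₄`: the tournament on 4 vertices with out-degree sequence (1,1,2,2). -/
def R4 : Tournament 4 where
  rel := ![![false, true, true, false], ![false, false, true, true],
           ![false, false, false, true], ![true, false, false, false]]
  irrefl := by decide
  total := by decide

/-- Two tournaments on the same number of vertices are isomorphic if some
permutation of the vertices carries one arc relation to the other. -/
def Isomorphic {k : ℕ} (S T : Tournament k) : Prop :=
  ∃ e : Equiv.Perm (Fin k), ∀ i j, S.rel i j = T.rel (e i) (e j)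

/-- The subtournament of `T` induced on the subset `A` is isomorphic to `S`. -/
def IsoOn {k n : ℕ} (S : Tournament k) (T : Tournament n) (A : Finset (Fin n)) : Prop :=
  ∃ f : Fin k → Fin n, Function.Injective f ∧ Finset.univ.image f = A ∧
    ∀ i j, S.rel i j = T.rel (f i) (f j)

open scoped Classical in
/-- The number of `k`-element subsets of the vertex set of `T` whose induced
subtournament is isomorphic to `S` (where `S` has `k` vertices). -/
noncomputable def copyCount {k n : ℕ} (S : Tournament k) (T : Tournament n) : ℕ :=
  ((Finset.powersetCard k (Finset.univ : Finset (Fin n))).filter (IsoOn S T)).card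

/-- The (unlabelled) density `p(S, T)`. -/
noncomputable def density {k n : ℕ} (S : Tournament k) (T : Tournament n) : ℝ :=
  (copyCount S T : ℝ) / (n.choose k : ℝ)

/-- The number of automorphisms of a tournament. -/
def autCount {k : ℕ} (S : Tournament k) : ℕ :=
  (Finset.univ.filter
    (fun e : Equiv.Perm (Fin k) => ∀ i j, S.rel i j = S.rel (e i) (e j))).card

/-- A sequence of tournaments with growing vertex sets is quasi-random if every
fixed tournament `S` on `k` vertices appears with density tending to
`k! / (|Aut S| * 2^(k(k-1)/2))`. -/
def QuasiRandom {nn : ℕ → ℕ} (T : ∀ j, Tournament (nn j)) : Prop :=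
  ∀ (k : ℕ) (S : Tournament k),
    Filter.Tendsto (fun j => density S (T j)) Filter.atTop
      (nhds ((k.factorial : ℝ) / ((autCount S : ℝ) * 2 ^ (k * (k - 1) / 2))))

/-- `D(u,v) = #{w : u→w ∧ w→v}`. -/
def Dcount {n : ℕ} (T : Tournament n) (u v : Fin n) : ℕ :=
  (Finset.univ.filter (fun w => T.rel u w ∧ T.rel w v)).card

/-- `C(u,v) = #{w : v→w ∧ w→u}`. -/
def Ccount {n : ℕ} (T : Tournament n) (u v : Fin n) : ℕ :=
  (Finset.univ.filter (fun w => T.rel v w ∧ T.rel w u)).card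

/-- `I(u,v) = #{w : w→u ∧ w→v}`. -/
def Icount {n : ℕ} (T : Tournament n) (u v : Fin n) : ℕ :=
  (Finset.univ.filter (fun w => T.rel w u ∧ T.rel w v)).card

/-- `O(u,v) = #{w : u→w ∧ v→w}`. -/
def Ocount {n : ℕ} (T : Tournament n) (u v : Fin n) : ℕ :=
  (Finset.univ.filter (fun w => T.rel u w ∧ T.rel v w)).card

/-- The subset `A` induces a transitive subtournament of `T`. -/
def IsTransOn {n : ℕ} (T : Tournament n) (A : Finset (Fin n)) : Prop :=
  ∀ u ∈ A, ∀ v ∈ A, ∀ w ∈ A, T.rel u v → T.rel v w → T.rel u w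

open scoped Classical in
/-- `tr_m(T)`: the number of `m`-element subsets of the vertex set of `T`
inducing a transitive subtournament. -/
noncomputable def trCount (m : ℕ) {n : ℕ} (T : Tournament n) : ℕ :=
  ((Finset.powersetCard m (Finset.univ : Finset (Fin n))).filter (IsTransOn T)).card

/-- The subtournament of `T` induced on a subset `A` of its vertices. -/
noncomputable def induce {n : ℕ} (T : Tournament n) (A : Finset (Fin n)) :
    Tournament A.card where
  rel i j := T.rel (A.orderIsoOfFin rfl i) (A.orderIsoOfFin rfl j)
  irrefl i := T.irrefl _
  total i j h := T.total _ _ (fun hc => h ((A.orderIsoOfFin rfl).injective (Subtype.ext hc)))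

/-- The out-neighbourhood `N⁺(u)` of a vertex. -/
def outSet {n : ℕ} (T : Tournament n) (u : Fin n) : Finset (Fin n) :=
  Finset.univ.filter (fun w => T.rel u w)

/-- The out-degree of a vertex. -/
def outDeg {n : ℕ} (T : Tournament n) (v : Fin n) : ℕ :=
  (Finset.univ.filter (fun w => T.rel v w)).card

/-- The multiset of out-degrees of a tournament. -/
def outDegs {n : ℕ} (T : Tournament n) : Multiset ℕ :=
  Finset.univ.val.map (outDeg T)

/-- The arc relation of `T` is transitive. -/
def IsTransitiveT {k : ℕ} (S : Tournament k) : Prop :=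
  ∀ u v w, S.rel u v → S.rel v w → S.rel u w


/-!
Every tournament on four vertices satisfies
`[≅ Tr₄] + [≅ R₄] + c = 1 + c (c - 1)`, where `c ∈ {0, 1, 2}` is its number of cyclic triangles
(two cyclic triangles on four vertices always share an arc). Summing over all 4-sets, a cyclic
triangle lies in `n - 3` of them, an ordered pair of cyclic triangles `uvw`, `uvx` in exactly one,
and the cyclic triangles through the arc `uv` are counted by `C(u,v)`; this gives
`3 (#Tr₄ + #R₄) + (n - 3) Σ C = 3 binom(n,4) + 3 Σ C (C - 1)`, sums over the `binom(n,2)` arcs.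
If `C(u,v)` is close to `(n - 2)/4` in `L¹` then `Σ C` and `Σ C²` are close to their values at
`C ≡ (n - 2)/4`, and `p(Tr₄) + p(R₄) = 3/4 + O(1/n + n⁻² Σ |C/(n-2) - 1/4|)`.
-/

open Finset

theorem sum_card_filter_subset_powersetCard {α β : Type*} [Fintype α] [DecidableEq α]
    (t : Finset β) (span : β → Finset α) {m k : ℕ} (hspan : ∀ x ∈ t, #(span x) = m)
    (hmk : m ≤ k) :
    ∑ A ∈ powersetCard k univ, #{x ∈ t | span x ⊆ A}
      = #t * (Fintype.card α - m).choose (k - m) := by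
  refine (sum_card_bipartiteAbove_eq_sum_card_bipartiteBelow (r := fun A x => span x ⊆ A)).trans
    (sum_const_nat fun x hx => ?_)
  rw [bipartiteBelow, card_filter_powersetCard_subset _ _ _ (subset_univ _) (hspan x hx ▸ hmk),
    hspan x hx, card_univ]

theorem cast_choose_four {K : Type*} [Field K] [CharZero K] (n : ℕ) :
    (n.choose 4 : K) = n * (n - 1) * (n - 2) * (n - 3) / 24 := by
  rw [Nat.cast_choose_eq_descPochhammer_div]
  simp [descPochhammer_succ_eval, Nat.factorial]

theorem abs_three_mul_sq_sub_le {c d : ℝ} (hd : 1 ≤ d) (hc : 0 ≤ c) (hcd : c ≤ d) :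
    |3 * c ^ 2 - (d + 2) * c + d * (d + 8) / 16| ≤ 4 * d ^ 2 * |c / d - 1 / 4| := by
  have hfac : 3 * c ^ 2 - (d + 2) * c + d * (d + 8) / 16
      = d * (c / d - 1 / 4) * (3 * c - d / 4 - 2) := by
    field_simp
    ring
  have hlin : |3 * c - d / 4 - 2| ≤ 4 * d := abs_le.mpr ⟨by linarith, by linarith⟩
  rw [hfac, abs_mul, abs_mul, abs_of_pos (by linarith : 0 < d)]
  calc d * |c / d - 1 / 4| * |3 * c - d / 4 - 2| ≤ d * |c / d - 1 / 4| * (4 * d) := by gcongr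
    _ = 4 * d ^ 2 * |c / d - 1 / 4| := by ring

namespace Tournament

variable {n : ℕ}

section Arcs

variable (T : Tournament n)

theorem ne_of_rel {u v : Fin n} (h : T.rel u v) : u ≠ v := by
  rintro rfl
  simp [T.irrefl] at h

theorem rel_swap_eq_false {u v : Fin n} (h : T.rel u v) : T.rel v u = false := by
  simpa [h] using T.total v u (T.ne_of_rel h).symm

theorem rel_or_rel_swap {u v : Fin n} (h : u ≠ v) : T.rel u v ∨ T.rel v u := by
  cases huv : T.rel u v <;> simp_all [T.total u v h]

def arcs : Finset (Fin n × Fin n) := {p | T.rel p.1 p.2}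

theorem sum_arcs {M : Type*} [AddCommMonoid M] (f : Fin n → Fin n → M) :
    ∑ p ∈ T.arcs, f p.1 p.2 = ∑ u, ∑ v, if T.rel u v then f u v else 0 := by
  rw [arcs, sum_filter, Fintype.sum_prod_type]

theorem card_arcs : #T.arcs = n.choose 2 := by
  set reversed : Finset (Fin n × Fin n) := {p | T.rel p.2 p.1}
  have hswap : #T.arcs = #reversed := card_equiv (Equiv.prodComm _ _) (by simp [arcs, reversed])
  have hdisj : Disjoint T.arcs reversed :=
    disjoint_filter.mpr fun p _ h => by simp [T.rel_swap_eq_false h]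
  have hunion : T.arcs ∪ reversed = univ.offDiag := by
    ext ⟨u, v⟩
    simp only [arcs, reversed, mem_union, mem_filter, mem_univ, true_and, mem_offDiag]
    exact ⟨by rintro (h | h) <;> simp [T.ne_of_rel h, (T.ne_of_rel h).symm], T.rel_or_rel_swap⟩
  have htwice : 2 * #T.arcs = n * (n - 1) := by
    rw [two_mul]
    nth_rw 2 [hswap]
    rw [← card_union_of_disjoint hdisj, hunion, offDiag_card, card_univ, Fintype.card_fin,
      Nat.mul_sub_one]
  rw [Nat.choose_two_right, ← htwice, Nat.mul_div_cancel_left _ two_pos]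

theorem Ccount_le {u v : Fin n} (h : u ≠ v) : Ccount T u v ≤ n - 2 := by
  calc Ccount T u v ≤ #((univ.erase u).erase v) := card_le_card fun w hw => by
        simp only [mem_filter] at hw
        simp [(T.ne_of_rel hw.2.1).symm, T.ne_of_rel hw.2.2]
    _ = n - 2 := by simp [card_erase_of_mem, h.symm, Nat.sub_sub]

end Arcs

section CyclicTriangles

variable (T : Tournament n)

def IsCycle (u v w : Fin n) : Prop := T.rel u v ∧ T.rel v w ∧ T.rel w u

instance (u v w : Fin n) : Decidable (T.IsCycle u v w) :=
  inferInstanceAs (Decidable (_ ∧ _ ∧ _))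

variable {T} in
theorem IsCycle.distinct {u v w : Fin n} (h : T.IsCycle u v w) : u ≠ v ∧ u ≠ w ∧ v ≠ w :=
  ⟨T.ne_of_rel h.1, (T.ne_of_rel h.2.2).symm, T.ne_of_rel h.2.1⟩

def cyclicTriangles : Finset (Fin n × Fin n × Fin n) := {x | T.IsCycle x.1 x.2.1 x.2.2}

def cyclicTrianglePairs : Finset (Fin n × Fin n × Fin n × Fin n) :=
  {x | T.IsCycle x.1 x.2.1 x.2.2.1 ∧ T.IsCycle x.1 x.2.1 x.2.2.2 ∧ x.2.2.1 ≠ x.2.2.2}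

theorem card_cyclicTriangles : #T.cyclicTriangles = ∑ p ∈ T.arcs, Ccount T p.1 p.2 := by
  rw [sum_arcs T (Ccount T), cyclicTriangles, card_filter, Fintype.sum_prod_type]
  refine sum_congr rfl fun u _ => ?_
  rw [Fintype.sum_prod_type]
  refine sum_congr rfl fun v _ => ?_
  by_cases h : T.rel u v <;> simp [h, IsCycle, Ccount, sum_boole]

theorem card_cyclicTrianglePairs :
    #T.cyclicTrianglePairs = ∑ p ∈ T.arcs, Ccount T p.1 p.2 * (Ccount T p.1 p.2 - 1) := by
  rw [sum_arcs T fun u v => Ccount T u v * (Ccount T u v - 1), cyclicTrianglePairs, card_filter,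
    Fintype.sum_prod_type]
  refine sum_congr rfl fun u _ => ?_
  rw [Fintype.sum_prod_type]
  refine sum_congr rfl fun v _ => ?_
  by_cases h : T.rel u v
  · rw [if_pos h, Ccount, Nat.mul_sub_one, ← offDiag_card, sum_boole, Nat.cast_id]
    congr 1
    ext ⟨w, x⟩
    simp [IsCycle, h, and_assoc]
  · simp [h, IsCycle]

end CyclicTriangles

theorem eq_of_rel_eq {S T : Tournament n} (h : S.rel = T.rel) : S = T := by
  cases S; cases T; cases h; rfl

def ofUpper (r : Fin n → Fin n → Bool) : Tournament n where
  rel i j := if i < j then r i j else if j < i then !r j i else false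
  irrefl v := by simp
  total u v h := by
    rcases lt_or_gt_of_ne h with h' | h' <;> simp [h', lt_asymm h']

theorem ofUpper_rel (T : Tournament n) : ofUpper T.rel = T := by
  refine eq_of_rel_eq (funext₂ fun i j => ?_)
  rcases lt_trichotomy i j with h | rfl | h
  · simp [ofUpper, h]
  · simp [ofUpper, T.irrefl]
  · simp [ofUpper, h, lt_asymm h, T.total i j h.ne']

theorem ofUpper_congr {r r' : Fin n → Fin n → Bool} (h : ∀ i j, i < j → r i j = r' i j) :
    ofUpper r = ofUpper r' := by
  refine eq_of_rel_eq (funext₂ fun i j => ?_)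
  rcases lt_trichotomy i j with hij | rfl | hij
  · simp [ofUpper, hij, h i j hij]
  · simp [ofUpper]
  · simp [ofUpper, hij, lt_asymm hij, h j i hij]

def upperPair : Fin 6 → Fin 4 × Fin 4 := ![(0, 1), (0, 2), (0, 3), (1, 2), (1, 3), (2, 3)]

def upperPairIdx : Fin 4 → Fin 4 → Fin 6 :=
  ![![0, 0, 1, 2], ![0, 0, 3, 4], ![1, 3, 0, 5], ![2, 4, 5, 0]]

theorem upperPair_upperPairIdx :
    ∀ i j : Fin 4, i < j → upperPair (upperPairIdx i j) = (i, j) := by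
  decide

theorem exists_eq_ofUpper_bits (S : Tournament 4) :
    ∃ b : Fin 6 → Bool, S = ofUpper fun i j => b (upperPairIdx i j) := by
  refine ⟨fun k => S.rel (upperPair k).1 (upperPair k).2, ?_⟩
  conv_lhs => rw [← ofUpper_rel S]
  exact ofUpper_congr fun i j h => by simp [upperPair_upperPairIdx i j h]

instance {k : ℕ} : DecidableRel (@Isomorphic k) := fun _ _ =>
  inferInstanceAs (Decidable (∃ _, _))

theorem four_vertex_identity (S : Tournament 4) :
    (if Isomorphic (Tr 4) S then 3 else 0) + (if Isomorphic R4 S then 3 else 0)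
      + #S.cyclicTriangles = 3 + 3 * #S.cyclicTrianglePairs := by
  -- a check of the `2 ^ 6` tournaments on `Fin 4`, each given by its arcs between `i < j`
  obtain ⟨b, rfl⟩ := exists_eq_ofUpper_bits S
  revert b
  decide +kernel

section Restrict

def restrict (T : Tournament n) (A : Finset (Fin n)) {k : ℕ} (h : #A = k) : Tournament k where
  rel i j := T.rel (A.orderEmbOfFin h i) (A.orderEmbOfFin h j)
  irrefl _ := T.irrefl _
  total _ _ hij := T.total _ _ ((A.orderEmbOfFin h).injective.ne hij)

variable {T : Tournament n} {A : Finset (Fin n)} {k : ℕ} (h : #A = k)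

theorem isoOn_iff_isomorphic_restrict (S : Tournament k) :
    IsoOn S T A ↔ Isomorphic S (T.restrict A h) := by
  set e := A.orderEmbOfFin h
  constructor
  · rintro ⟨f, hf, himage, hrel⟩
    have hmem : ∀ i, ∃ a, e a = f i := fun i => by
      rw [← Set.mem_range, A.range_orderEmbOfFin h, mem_coe, ← himage]
      exact mem_image_of_mem f (mem_univ i)
    choose g hg using hmem
    have hg_inj : g.Injective := fun i j hij => hf (by rw [← hg i, ← hg j, hij])
    refine ⟨Equiv.ofBijective g (Finite.injective_iff_bijective.mp hg_inj), fun i j => ?_⟩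
    simp [restrict, hrel, hg, e]
  · rintro ⟨σ, hσ⟩
    refine ⟨e ∘ σ, e.injective.comp σ.injective, ?_, hσ⟩
    rw [← image_image, image_univ_equiv, A.image_orderEmbOfFin_univ h]

theorem card_cyclicTriangles_restrict :
    #(T.restrict A h).cyclicTriangles = #{x ∈ T.cyclicTriangles | x ∈ A ×ˢ A ×ˢ A} := by
  set E := (A.orderEmbOfFin h).toEmbedding
  have hA : A ×ˢ A ×ˢ A
      = (univ : Finset (Fin k × Fin k × Fin k)).map (E.prodMap (E.prodMap E)) := by
    simp only [← univ_product_univ, prodMap_map_product, E, A.map_orderEmbOfFin_univ h]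
  have hfilter : {x ∈ T.cyclicTriangles | x ∈ A ×ˢ A ×ˢ A}
      = {x ∈ A ×ˢ A ×ˢ A | T.IsCycle x.1 x.2.1 x.2.2} := by
    ext
    simp [cyclicTriangles, and_comm]
  rw [hfilter, hA, filter_map, card_map]
  rfl

theorem card_cyclicTrianglePairs_restrict :
    #(T.restrict A h).cyclicTrianglePairs
      = #{x ∈ T.cyclicTrianglePairs | x ∈ A ×ˢ A ×ˢ A ×ˢ A} := by
  set E := (A.orderEmbOfFin h).toEmbedding
  have hA : A ×ˢ A ×ˢ A ×ˢ A = (univ : Finset (Fin k × Fin k × Fin k × Fin k)).map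
      (E.prodMap (E.prodMap (E.prodMap E))) := by
    simp only [← univ_product_univ, prodMap_map_product, E, A.map_orderEmbOfFin_univ h]
  have hfilter : {x ∈ T.cyclicTrianglePairs | x ∈ A ×ˢ A ×ˢ A ×ˢ A}
      = {x ∈ A ×ˢ A ×ˢ A ×ˢ A |
          T.IsCycle x.1 x.2.1 x.2.2.1 ∧ T.IsCycle x.1 x.2.1 x.2.2.2 ∧ x.2.2.1 ≠ x.2.2.2} := by
    ext
    simp [cyclicTrianglePairs, and_comm]
  rw [hfilter, hA, filter_map, card_map, cyclicTrianglePairs]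
  exact congrArg card (filter_congr fun x _ => by simp [IsCycle, restrict, E])

end Restrict

section CountingIdentity

variable (T : Tournament n)

theorem sum_card_cyclicTriangles_within_fourSets :
    ∑ A ∈ powersetCard 4 univ, #{x ∈ T.cyclicTriangles | x ∈ A ×ˢ A ×ˢ A}
      = #T.cyclicTriangles * (n - 3) := by
  have := sum_card_filter_subset_powersetCard T.cyclicTriangles (fun x => {x.1, x.2.1, x.2.2})
    (m := 3) (k := 4) (fun x hx => ?_) (by norm_num)
  · simpa [insert_subset_iff, and_assoc] using this
  obtain ⟨huv, huw, hvw⟩ := (mem_filter.mp hx).2.distinct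
  exact card_eq_three.mpr ⟨_, _, _, huv, huw, hvw, rfl⟩

theorem sum_card_cyclicTrianglePairs_within_fourSets :
    ∑ A ∈ powersetCard 4 univ, #{x ∈ T.cyclicTrianglePairs | x ∈ A ×ˢ A ×ˢ A ×ˢ A}
      = #T.cyclicTrianglePairs := by
  have := sum_card_filter_subset_powersetCard T.cyclicTrianglePairs
    (fun x => {x.1, x.2.1, x.2.2.1, x.2.2.2}) (m := 4) (k := 4) (fun x hx => ?_) le_rfl
  · simpa [insert_subset_iff, and_assoc] using this
  obtain ⟨hw, hx, hwx⟩ := (mem_filter.mp hx).2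
  obtain ⟨huv, huw, hvw⟩ := hw.distinct
  obtain ⟨-, hux, hvx⟩ := hx.distinct
  exact card_eq_four.mpr ⟨_, _, _, _, huv, huw, hux, hvw, hvx, hwx, rfl⟩

open scoped Classical in
theorem four_set_identity {A : Finset (Fin n)} (h : #A = 4) :
    (if IsoOn (Tr 4) T A then 3 else 0) + (if IsoOn R4 T A then 3 else 0)
      + #{x ∈ T.cyclicTriangles | x ∈ A ×ˢ A ×ˢ A}
      = 3 + 3 * #{x ∈ T.cyclicTrianglePairs | x ∈ A ×ˢ A ×ˢ A ×ˢ A} := by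
  have := four_vertex_identity (T.restrict A h)
  simp only [← isoOn_iff_isomorphic_restrict h, card_cyclicTriangles_restrict h,
    card_cyclicTrianglePairs_restrict h] at this
  convert this

open scoped Classical in
theorem copyCount_identity :
    3 * copyCount (Tr 4) T + 3 * copyCount R4 T + (n - 3) * ∑ p ∈ T.arcs, Ccount T p.1 p.2
      = 3 * n.choose 4 + 3 * ∑ p ∈ T.arcs, Ccount T p.1 p.2 * (Ccount T p.1 p.2 - 1) := by
  rw [← card_cyclicTriangles, ← card_cyclicTrianglePairs, mul_comm (n - 3),
    ← sum_card_cyclicTriangles_within_fourSets, ← sum_card_cyclicTrianglePairs_within_fourSets]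
  calc _ = ∑ A ∈ powersetCard 4 univ,
          ((if IsoOn (Tr 4) T A then 3 else 0) + (if IsoOn R4 T A then 3 else 0)
            + #{x ∈ T.cyclicTriangles | x ∈ A ×ˢ A ×ˢ A}) := by
        simp only [copyCount, card_filter, mul_sum, mul_ite, mul_one, mul_zero, sum_add_distrib]
    _ = ∑ A ∈ powersetCard 4 univ,
          (3 + 3 * #{x ∈ T.cyclicTrianglePairs | x ∈ A ×ˢ A ×ˢ A ×ˢ A}) :=
        sum_congr rfl fun A hA => T.four_set_identity (mem_powersetCard_univ.mp hA)
    _ = _ := by simp [sum_add_distrib, mul_sum, mul_comm]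

end CountingIdentity

section Estimates

variable (T : Tournament n)

theorem cast_copyCount_identity (hn : 3 ≤ n) :
    3 * ((copyCount (Tr 4) T : ℝ) + copyCount R4 T)
      = 3 * n.choose 4 + 3 * ∑ p ∈ T.arcs, (Ccount T p.1 p.2 : ℝ) ^ 2
        - n * ∑ p ∈ T.arcs, (Ccount T p.1 p.2 : ℝ) := by
  have h := congrArg (Nat.cast : ℕ → ℝ) T.copyCount_identity
  have hpair : ∀ C : ℕ, ((C * (C - 1) : ℕ) : ℝ) = (C : ℝ) ^ 2 - C := fun C => by
    rw [Nat.mul_sub_one, Nat.cast_sub (Nat.le_mul_self C)]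
    push_cast
    ring
  push_cast [Nat.cast_sub hn, hpair, sum_sub_distrib] at h
  linarith

-- `n (n - 1) (n - 2) (n + 6) / 32` is the value of `n Σ C - 3 Σ C²` when `C ≡ (n - 2) / 4`.
theorem abs_sum_arcs_sq_sub_le (hn : 3 ≤ n) :
    |3 * ∑ p ∈ T.arcs, (Ccount T p.1 p.2 : ℝ) ^ 2 - n * ∑ p ∈ T.arcs, (Ccount T p.1 p.2 : ℝ)
        + n * (n - 1) * (n - 2) * (n + 6) / 32|
      ≤ 4 * ((n : ℝ) - 2) ^ 2
        * ∑ p ∈ T.arcs, |(Ccount T p.1 p.2 : ℝ) / (n - 2) - 1 / 4| := by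
  have hn' : (3 : ℝ) ≤ n := by exact_mod_cast hn
  calc _ = |∑ p ∈ T.arcs, (3 * (Ccount T p.1 p.2 : ℝ) ^ 2
          - ((n - 2) + 2) * Ccount T p.1 p.2 + (n - 2) * ((n - 2) + 8) / 16)| := by
        simp only [sum_add_distrib, sum_sub_distrib, ← mul_sum, sum_const, card_arcs,
          nsmul_eq_mul, Nat.cast_choose_two]
        ring_nf
    _ ≤ ∑ p ∈ T.arcs,
          4 * ((n : ℝ) - 2) ^ 2 * |(Ccount T p.1 p.2 : ℝ) / (n - 2) - 1 / 4| := by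
        refine (abs_sum_le_sum_abs _ _).trans (sum_le_sum fun p hp => ?_)
        have h := Nat.cast_le (α := ℝ).mpr (T.Ccount_le (T.ne_of_rel (mem_filter.mp hp).2))
        rw [Nat.cast_sub (by omega : 2 ≤ n), Nat.cast_ofNat] at h
        exact abs_three_mul_sq_sub_le (by linarith) (Nat.cast_nonneg _) h
    _ = _ := by rw [mul_sum]

-- The first three terms of the numerator are the quantity bounded in `abs_sum_arcs_sq_sub_le`.
theorem density_add_density_sub_eq (hn : 4 ≤ n) :
    density (Tr 4) T + density R4 T - 3 / 4
      = (3 * ∑ p ∈ T.arcs, (Ccount T p.1 p.2 : ℝ) ^ 2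
          - n * ∑ p ∈ T.arcs, (Ccount T p.1 p.2 : ℝ)
          + n * (n - 1) * (n - 2) * (n + 6) / 32 - 9 * n * (n - 1) * (n - 2) / 32)
        / (3 * n.choose 4) := by
  have hcount := T.cast_copyCount_identity (by omega)
  have hB : (n.choose 4 : ℝ) ≠ 0 := Nat.cast_ne_zero.mpr (Nat.choose_pos hn).ne'
  rw [density, density, ← add_div]
  field_simp
  rw [cast_choose_four] at hcount ⊢
  linear_combination 128 * hcount

theorem abs_density_add_density_sub_le (hn : 5 ≤ n) :
    |density (Tr 4) T + density R4 T - 3 / 4|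
      ≤ 9 / (4 * ((n : ℝ) - 3)) + 64 * ((1 / (n : ℝ) ^ 2) * ∑ u, ∑ v,
          if T.rel u v then |(Ccount T u v : ℝ) / ((n : ℝ) - 2) - 1 / 4| else 0) := by
  rw [← T.sum_arcs fun u v => |(Ccount T u v : ℝ) / ((n : ℝ) - 2) - 1 / 4|,
    T.density_add_density_sub_eq (by omega)]
  set e := ∑ p ∈ T.arcs, |(Ccount T p.1 p.2 : ℝ) / (n - 2) - 1 / 4|
  have hR := T.abs_sum_arcs_sq_sub_le (by omega)
  have hn' : (5 : ℝ) ≤ n := by exact_mod_cast hn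
  have h1 : (0 : ℝ) < n - 1 := by linarith
  have h2 : (0 : ℝ) < n - 2 := by linarith
  have h3 : (0 : ℝ) < n - 3 := by linarith
  have hB : (0 : ℝ) < 3 * n.choose 4 := by
    have : (0 : ℝ) < n.choose 4 := Nat.cast_pos.mpr (Nat.choose_pos (by omega))
    positivity
  have hrate : 32 * ((n : ℝ) - 2) / (n * (n - 1) * (n - 3)) ≤ 64 / (n : ℝ) ^ 2 := by
    rw [div_le_div_iff₀ (by positivity) (by positivity)]
    nlinarith
  rw [abs_div, abs_of_pos hB]
  calc _ ≤ (4 * ((n : ℝ) - 2) ^ 2 * e + 9 * n * (n - 1) * (n - 2) / 32) / (3 * n.choose 4) := by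
        refine div_le_div_of_nonneg_right ((abs_sub _ _).trans (add_le_add hR ?_)) hB.le
        rw [abs_of_pos (by positivity)]
    _ = 9 / (4 * ((n : ℝ) - 3)) + 32 * ((n : ℝ) - 2) / (n * (n - 1) * (n - 3)) * e := by
        rw [cast_choose_four]
        field_simp
        ring
    _ ≤ 9 / (4 * ((n : ℝ) - 3)) + 64 / (n : ℝ) ^ 2 * e := by gcongr
    _ = _ := by ring

end Estimates

end Tournament

/-- if `(1/n_j²) · Σ_{arcs (u,v)} |C(u,v)/(n_j-2) - 1/4| → 0`, then
`p(Tr₄, T_j) + p(R₄, T_j) → 3/4`. -/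
theorem tr4_plus_r4_of_C_concentration (nn : ℕ → ℕ) (T : ∀ j, Tournament (nn j))
    (hn : Filter.Tendsto nn Filter.atTop Filter.atTop)
    (h : Filter.Tendsto (fun j => (1 / (nn j : ℝ) ^ 2) * ∑ u, ∑ v, if (T j).rel u v then |(Ccount (T j) u v : ℝ) / ((nn j : ℝ) - 2) - 1 / 4| else 0)
      Filter.atTop (nhds 0)) :
    Filter.Tendsto (fun j => density (Tr 4) (T j) + density R4 (T j))
      Filter.atTop (nhds (3 / 4)) := by
  have hdenom : Filter.Tendsto (fun j => 4 * ((nn j : ℝ) - 3)) Filter.atTop Filter.atTop :=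
    Filter.tendsto_atTop_add_const_right _ _ (tendsto_natCast_atTop_atTop.comp hn)
      |>.const_mul_atTop four_pos
  have hzero := squeeze_zero_norm' (f := fun j => density (Tr 4) (T j) + density R4 (T j) - 3 / 4)
    ((hn.eventually_ge_atTop 5).mono fun j hj => (T j).abs_density_add_density_sub_le hj)
    (by simpa using (tendsto_const_nhds.div_atTop hdenom).add (h.const_mul 64))
  simpa using tendsto_sub_nhds_zero_iff.mp hzero
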